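/- Let μ = μ_{R,B} be the self-affine measure for R = [[2,1],[0,2]] and B = {(0,0),(1,0)}. Then the zero set of the Fourier transform of μ is Z(μ̂) = {(ξ₁,ξ₂) ∈ ℝ² : ξ₁ ∈ ℤ∖{0}}, i.e. μ̂(ξ₁,ξ₂) = 0 if and only if ξ₁ is a nonzero integer. -/

import Mathlib

/-!
Pushing `μ_{R,B}` back to `[0,1]` gives `μ̂(ξ) = ∫₀¹ e^{-2πiξ₁x} dx`. This is `1` when `ξ₁ = 0` and
`(e^c - 1)/c` with `c = -2πiξ₁` otherwise, so it vanishes exactly when `e^{-2πiξ₁} = 1` with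
`ξ₁ ≠ 0`, i.e. when `ξ₁` is a nonzero integer.
-/

open MeasureTheory Filter Set Metric
open scoped ENNReal

noncomputable section

/-- The plane with the Euclidean metric. -/
abbrev Plane : Type := EuclideanSpace ℝ (Fin 2)

/-- The point `(a, b)` of the Euclidean plane. -/
def pt (a b : ℝ) : Plane := WithLp.toLp 2 ![a, b]

/-- The self-affine measure `μ_{R,B}` for `R = [[2,1],[0,2]]`, `B = {(0,0),(1,0)}`:
the pushforward of Lebesgue measure on `[0,1]` under `x ↦ (x, 0)`. -/
def muRB : Measure Plane :=
  Measure.map (fun x : ℝ => pt x 0) (volume.restrict (Set.Icc (0:ℝ) 1))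

instance : IsProbabilityMeasure (volume.restrict (Set.Icc (0:ℝ) 1)) :=
  ⟨by simp [Real.volume_Icc]⟩

lemma measurable_pt0 : Measurable (fun x : ℝ => pt x 0) := by
  unfold pt
  refine (PiLp.continuous_toLp 2 _).measurable.comp ?_
  refine measurable_pi_lambda _ (fun i => ?_)
  fin_cases i
  · simp only [Matrix.cons_val_zero]
    exact measurable_id
  · simp only [Matrix.cons_val_one, Matrix.head_cons]
    exact measurable_const

instance : IsProbabilityMeasure muRB :=
  Measure.isProbabilityMeasure_map measurable_pt0.aemeasurable

/-- The Fourier transform `μ̂(ξ) = ∫ e^{-2πi⟨ξ,x⟩} dμ(x)` of a measure on the plane. -/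
def fourierTransform (μ : Measure Plane) (ξ : Plane) : ℂ :=
  ∫ x, Complex.exp ((-(2 * Real.pi * (inner ℝ ξ x : ℝ)) : ℝ) * Complex.I) ∂μ

/-- The exponential function `e_λ(x) = e^{-2πi⟨λ,x⟩}`. -/
def expFn (lam : Plane) : Plane → ℂ :=
  fun x => Complex.exp ((-(2 * Real.pi * (inner ℝ lam x : ℝ)) : ℝ) * Complex.I)

lemma expFn_memLp (μ : Measure Plane) [IsFiniteMeasure μ] (lam : Plane) :
    MemLp (expFn lam) 2 μ := by
  refine MemLp.of_bound ?_ 1 ?_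
  · apply Continuous.aestronglyMeasurable
    unfold expFn
    have h1 : Continuous fun x : Plane => (inner ℝ lam x : ℝ) :=
      continuous_const.inner continuous_id
    exact Complex.continuous_exp.comp
      ((Complex.continuous_ofReal.comp ((continuous_const.mul h1).neg)).mul continuous_const)
  · refine Eventually.of_forall fun x => ?_
    unfold expFn
    rw [Complex.norm_exp_ofReal_mul_I]

/-- The exponential `e_λ` as an element of `L²(μ)`. -/
def expLp (μ : Measure Plane) [IsFiniteMeasure μ] (lam : Plane) : Lp ℂ 2 μ :=
  (expFn_memLp μ lam).toLp _

/-- `Λ` is an orthogonal set of `μ`: the exponentials `{e_λ : λ ∈ Λ}` form an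
orthonormal family in `L²(μ)`. -/
def IsOrthogonalSet (μ : Measure Plane) [IsFiniteMeasure μ] (Λ : Set Plane) : Prop :=
  Orthonormal ℂ (fun lam : Λ => expLp μ lam)

/-- `Λ` is a spectrum of `μ`: the exponentials `{e_λ : λ ∈ Λ}` form an
orthonormal basis of `L²(μ)`. -/
def IsSpectrum (μ : Measure Plane) [IsFiniteMeasure μ] (Λ : Set Plane) : Prop :=
  Orthonormal ℂ (fun lam : Λ => expLp μ lam) ∧
    (Submodule.span ℂ (Set.range (fun lam : Λ => expLp μ lam))).topologicalClosure = ⊤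

/-- The upper `r`-Beurling density
`D_r^+(Λ) = limsup_{h→∞} sup_{x} #(Λ ∩ B(x,h)) / h^r`. -/
def beurlingDensity (r : ℝ) (Λ : Set Plane) : ℝ≥0∞ :=
  limsup (fun h : ℝ =>
    ⨆ x : Plane, ((Λ ∩ Metric.ball x h).encard : ℝ≥0∞) / ENNReal.ofReal (h ^ r)) atTop

/-- The upper `r`-density (centered at the origin)
`B_r^+(Λ) = limsup_{h→∞} #(Λ ∩ B(0,h)) / h^r`. -/
def upperDensity (r : ℝ) (Λ : Set Plane) : ℝ≥0∞ :=
  limsup (fun h : ℝ =>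
    ((Λ ∩ Metric.ball (0 : Plane) h).encard : ℝ≥0∞) / ENNReal.ofReal (h ^ r)) atTop

/-- The Beurling dimension `dim_Be(Λ) = sup {r > 0 : D_r^+(Λ) = ∞}`
(equal to `0` when the set is empty, by the convention `sSup ∅ = 0` in `ℝ`). -/
def beurlingDim (Λ : Set Plane) : ℝ :=
  sSup {r : ℝ | 0 < r ∧ beurlingDensity r Λ = ⊤}

/-- The Banach dimension `dim_Ba(Λ) = sup {r > 0 : B_r^+(Λ) = ∞}`. -/
def banachDim (Λ : Set Plane) : ℝ :=
  sSup {r : ℝ | 0 < r ∧ upperDensity r Λ = ⊤}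

/-- The sign of an integer, as a real number. -/
def isgn (n : ℤ) : ℝ := (Int.sign n : ℝ)

end

open Complex Real

lemma inner_pt_zero (ξ : Plane) (x : ℝ) : inner ℝ ξ (pt x 0) = ξ 0 * x := by
  simp [pt, PiLp.inner_apply, Fin.sum_univ_two, mul_comm]

lemma fourierTransform_muRB (ξ : Plane) :
    fourierTransform muRB ξ = ∫ x in (0:ℝ)..1, exp (-2 * π * ξ 0 * I * x) := by
  have hcont : Continuous fun x : Plane => exp ((-(2 * π * inner ℝ ξ x) : ℝ) * I) := by
    fun_prop
  rw [fourierTransform, muRB, integral_map measurable_pt0.aemeasurable hcont.aestronglyMeasurable,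
    integral_Icc_eq_integral_Ioc, ← intervalIntegral.integral_of_le zero_le_one]
  congr 1 with x
  rw [inner_pt_zero]
  push_cast
  ring_nf

lemma integral_zero_one_exp_mul_eq_zero_iff (c : ℂ) :
    ∫ x in (0:ℝ)..1, exp (c * x) = 0 ↔ c ≠ 0 ∧ exp c = 1 := by
  rcases eq_or_ne c 0 with rfl | hc
  · simp
  · rw [integral_exp_mul_complex hc]
    simp [hc, sub_eq_zero]

lemma exp_neg_two_pi_mul_I_eq_one_iff (t : ℝ) :
    exp (-2 * π * t * I) = 1 ↔ ∃ k : ℤ, t = k := by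
  rw [Complex.exp_eq_one_iff]
  refine ⟨fun ⟨n, hn⟩ => ⟨-n, ?_⟩, fun ⟨k, hk⟩ => ⟨-k, by rw [hk]; push_cast; ring⟩⟩
  have h2pi : (2 * π * I : ℂ) ≠ 0 := by simp [pi_ne_zero, I_ne_zero]
  have hsum : ((t : ℂ) + n) * (2 * π * I) = 0 := by linear_combination -hn
  push_cast
  exact_mod_cast eq_neg_of_add_eq_zero_left ((mul_eq_zero.mp hsum).resolve_right h2pi)

/-- The zero set of the Fourier transform of `μ_{R,B}` is
`{(ξ₁,ξ₂) : ξ₁ ∈ ℤ \ {0}}`. -/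
theorem zero_set_fourierTransform_muRB (ξ : Plane) :
    fourierTransform muRB ξ = 0 ↔ ∃ k : ℤ, k ≠ 0 ∧ ξ 0 = (k : ℝ) := by
  have hc : -2 * π * ξ 0 * I ≠ 0 ↔ ξ 0 ≠ 0 := by simp [pi_ne_zero, I_ne_zero]
  rw [fourierTransform_muRB, integral_zero_one_exp_mul_eq_zero_iff, hc,
    exp_neg_two_pi_mul_I_eq_one_iff]
  constructor
  · rintro ⟨h0, k, hk⟩
    exact ⟨k, by rintro rfl; exact h0 (by simpa using hk), hk⟩
  · rintro ⟨k, hk, hξ⟩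
    exact ⟨by simpa [hξ], k, hξ⟩
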